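/- For |q|<1 and real exponents a, b, the limit as q→1⁻ of the ratio of infinite q-Pochhammer products (x; q^a, q)_∞ / (x; q^b, q)_∞, where (x|c,q)_∞ = ∏_{n=0}^∞ (1 - c q^n x), equals (1-x)^{b-a} for |x|<1. -/

import Mathlib

/-- The infinite q-Pochhammer-type product `(x | c, q)_∞ = ∏_{n=0}^∞ (1 - c q^n x)`. -/
noncomputable def qPoch (x c q : ℂ) : ℂ := ∏' n : ℕ, (1 - c * q ^ n * x)

/-!
Expanding every `log (1 - c q^n x)` in powers of `c q^n x` and summing the geometric series in `n`
first gives `(x | c, q)_∞ = exp (-∑ₖ (c x)^k / (k (1 - q^k)))`. For `c = q^a` and `c = q^b` the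
ratio is therefore `exp (∑ₖ x^k / k · (q^{bk} - q^{ak}) / (1 - q^k))`. As `q → 1⁻` each
coefficient `(q^{bk} - q^{ak}) / (1 - q^k)` tends to `a - b` (a ratio of derivatives at `q = 1`),
and by Bernoulli's inequality it is bounded by `⌈|a - b|⌉ q^{k min(a, b)}`, so dominated
convergence yields `exp ((a - b) (-log (1 - x))) = (1 - x)^(b - a)`.
-/

open Filter Set Topology

lemma norm_mul_pow_lt_one {w q : ℂ} (hw : ‖w‖ < 1) (hq : ‖q‖ ≤ 1) (n : ℕ) :
    ‖w * q ^ n‖ < 1 := by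
  rw [norm_mul, norm_pow]
  exact (mul_le_of_le_one_right (norm_nonneg w) (pow_le_one₀ (norm_nonneg q) hq)).trans_lt hw

lemma norm_pow_div_natCast_le (z : ℂ) (k : ℕ) : ‖z ^ k / k‖ ≤ ‖z‖ ^ k := by
  rcases k.eq_zero_or_pos with rfl | hk
  · simp
  rw [norm_div, Complex.norm_natCast, norm_pow]
  exact div_le_self (by positivity) (Nat.one_le_cast.mpr hk)

lemma summable_mul_pow_pow_div {w q : ℂ} (hw : ‖w‖ < 1) (hq : ‖q‖ < 1) :
    Summable fun p : ℕ × ℕ => (w * q ^ p.1) ^ p.2 / p.2 := by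
  refine .of_norm_bounded ((summable_geometric_of_lt_one (norm_nonneg q) hq).mul_of_nonneg
    (summable_geometric_of_lt_one (norm_nonneg w) hw) (fun _ => by positivity)
    (fun _ => by positivity)) ?_
  rintro ⟨n, k⟩
  rcases k.eq_zero_or_pos with rfl | hk
  · simp
  calc ‖(w * q ^ n) ^ k / k‖ ≤ ‖w * q ^ n‖ ^ k := norm_pow_div_natCast_le _ k
    _ = (‖q‖ ^ n) ^ k * ‖w‖ ^ k := by rw [norm_mul, norm_pow, mul_pow, mul_comm]
    _ ≤ ‖q‖ ^ n * ‖w‖ ^ k := by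
        gcongr
        exact pow_le_of_le_one (by positivity) (pow_le_one₀ (norm_nonneg q) hq.le) hk.ne'

lemma hasSum_pow_div_mul_one_sub_pow {w q : ℂ} (hw : ‖w‖ < 1) (hq : ‖q‖ < 1) :
    HasSum (fun k : ℕ => w ^ k / (k * (1 - q ^ k))) (∑' n : ℕ, -Complex.log (1 - w * q ^ n)) := by
  have hF := (summable_mul_pow_pow_div hw hq).hasSum
  have hrow (n : ℕ) : HasSum (fun k : ℕ => (w * q ^ n) ^ k / k) (-Complex.log (1 - w * q ^ n)) :=
    Complex.hasSum_taylorSeries_neg_log (norm_mul_pow_lt_one hw hq.le n)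
  have hcol (k : ℕ) : HasSum (fun n : ℕ => (w * q ^ n) ^ k / k) (w ^ k / (k * (1 - q ^ k))) := by
    rcases k.eq_zero_or_pos with rfl | hk
    · simp
    have hqk : ‖q ^ k‖ < 1 := by
      rw [norm_pow]; exact pow_lt_one₀ (norm_nonneg q) hq hk.ne'
    have := (hasSum_geometric_of_norm_lt_one hqk).mul_left (w ^ k / k)
    rw [← div_eq_mul_inv, div_div] at this
    exact this.congr_fun fun n => by ring
  rw [(hF.prod_fiberwise hrow).tsum_eq]
  exact ((Equiv.prodComm ℕ ℕ).hasSum_iff.mpr hF).prod_fiberwise hcol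

lemma qPoch_eq_exp_neg_tsum {x c q : ℂ} (hcx : ‖c * x‖ < 1) (hq : ‖q‖ < 1) :
    qPoch x c q = Complex.exp (-∑' k : ℕ, (c * x) ^ k / (k * (1 - q ^ k))) := by
  have hterm (n : ℕ) : 1 - c * q ^ n * x = 1 - c * x * q ^ n := by ring
  have hne (n : ℕ) : 1 - c * q ^ n * x ≠ 0 := by
    rw [hterm, sub_ne_zero]
    exact fun h => (norm_mul_pow_lt_one hcx hq.le n).ne (by rw [← h, norm_one])
  have hlog : Summable fun n : ℕ => Complex.log (1 - c * q ^ n * x) := by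
    simp_rw [hterm, sub_eq_add_neg]
    exact Complex.summable_log_one_add_of_summable
      ((summable_geometric_of_norm_lt_one hq).mul_left (c * x)).neg
  rw [qPoch, ← Complex.cexp_tsum_eq_tprod hne hlog, (hasSum_pow_div_mul_one_sub_pow hcx hq).tsum_eq,
    tsum_neg, neg_neg]
  simp_rw [hterm]

/-- `x ^ k / k * qLogCoeff a b q k` is the `k`-th Taylor coefficient in `x` of
`log ((x | q^a, q)_∞ / (x | q^b, q)_∞)`. -/
noncomputable def qLogCoeff (a b q : ℝ) (k : ℕ) : ℝ := ((q ^ b) ^ k - (q ^ a) ^ k) / (1 - q ^ k)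

lemma qPoch_rpow_div_qPoch_rpow {a b q : ℝ} {x : ℂ} (hq : q ∈ Ioo 0 1)
    (ha : q ^ a * ‖x‖ < 1) (hb : q ^ b * ‖x‖ < 1) :
    qPoch x ((q : ℂ) ^ (a : ℂ)) q / qPoch x ((q : ℂ) ^ (b : ℂ)) q =
      Complex.exp (∑' k : ℕ, x ^ k / k * qLogCoeff a b q k) := by
  have hq' : ‖(q : ℂ)‖ < 1 := by
    rw [Complex.norm_real, Real.norm_of_nonneg hq.1.le]
    exact hq.2
  have hnorm (e : ℝ) : ‖((q ^ e : ℝ) : ℂ) * x‖ = q ^ e * ‖x‖ := by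
    rw [norm_mul, Complex.norm_real, Real.norm_of_nonneg (Real.rpow_nonneg hq.1.le e)]
  rw [← hnorm] at ha hb
  have hSa := hasSum_pow_div_mul_one_sub_pow ha hq'
  have hSb := hasSum_pow_div_mul_one_sub_pow hb hq'
  rw [← Complex.ofReal_cpow hq.1.le, ← Complex.ofReal_cpow hq.1.le, qPoch_eq_exp_neg_tsum ha hq',
    qPoch_eq_exp_neg_tsum hb hq', ← Complex.exp_sub, neg_sub_neg,
    ← hSb.summable.tsum_sub hSa.summable]
  congr 1
  refine tsum_congr fun k => ?_
  simp only [qLogCoeff, Complex.ofReal_div, Complex.ofReal_sub, Complex.ofReal_pow,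
    Complex.ofReal_one, ← div_div]
  ring

lemma tendsto_div_nhdsNE_of_hasDerivAt {f g : ℝ → ℝ} {f' g' y : ℝ} (hf : HasDerivAt f f' y)
    (hg : HasDerivAt g g' y) (hfy : f y = 0) (hgy : g y = 0) (hg' : g' ≠ 0) :
    Tendsto (fun z => f z / g z) (𝓝[≠] y) (𝓝 (f' / g')) := by
  refine ((hasDerivAt_iff_tendsto_slope.mp hf).div (hasDerivAt_iff_tendsto_slope.mp hg)
    hg').congr' ?_
  filter_upwards [self_mem_nhdsWithin] with z hz
  rw [Pi.div_apply, slope_def_field, slope_def_field, hfy, hgy, sub_zero, sub_zero]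
  exact div_div_div_cancel_right₀ (sub_ne_zero.mpr hz) _ _

lemma tendsto_qLogCoeff (a b : ℝ) {k : ℕ} (hk : k ≠ 0) :
    Tendsto (qLogCoeff a b · k) (𝓝[≠] 1) (𝓝 (a - b)) := by
  have hpow (e : ℝ) : HasDerivAt (fun q : ℝ => (q ^ e) ^ k) (k * e) 1 := by
    simpa using (Real.hasDerivAt_rpow_const (p := e) (Or.inl one_ne_zero)).fun_pow k
  have hden : HasDerivAt (fun q : ℝ => 1 - q ^ k) (-k) 1 := by
    simpa using (hasDerivAt_pow k (1 : ℝ)).const_sub 1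
  have hk' : (k : ℝ) ≠ 0 := Nat.cast_ne_zero.mpr hk
  have h := tendsto_div_nhdsNE_of_hasDerivAt ((hpow b).fun_sub (hpow a)) hden (by simp) (by simp)
    (neg_ne_zero.mpr hk')
  rwa [← mul_sub, div_neg, mul_div_cancel_left₀ _ hk', neg_sub] at h

lemma one_sub_rpow_le_natCeil_mul {y r : ℝ} (hy₀ : 0 < y) (hy₁ : y ≤ 1) :
    1 - y ^ r ≤ ⌈r⌉₊ * (1 - y) := by
  have hceil : y ^ (⌈r⌉₊ : ℝ) ≤ y ^ r := Real.rpow_le_rpow_of_exponent_ge hy₀ hy₁ (Nat.le_ceil r)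
  have hbernoulli := one_add_mul_le_pow (a := y - 1) (by linarith) ⌈r⌉₊
  rw [Real.rpow_natCast] at hceil
  rw [add_sub_cancel] at hbernoulli
  linarith

lemma abs_qLogCoeff_le {a b q : ℝ} (hq : q ∈ Ioo 0 1) (k : ℕ) :
    |qLogCoeff a b q k| ≤ ⌈|a - b|⌉₊ * (q ^ min a b) ^ k := by
  wlog hab : a ≤ b generalizing a b
  · simpa only [qLogCoeff, abs_div, abs_sub_comm, min_comm] using this (le_of_not_ge hab)
  obtain ⟨hq₀, hq₁⟩ := hq
  rcases k.eq_zero_or_pos with rfl | hk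
  · simp [qLogCoeff]
  have hqk : 0 < 1 - q ^ k := sub_pos.mpr (pow_lt_one₀ hq₀.le hq₁ hk.ne')
  have hsplit : (q ^ b) ^ k = (q ^ a) ^ k * (q ^ k) ^ (b - a) := by
    rw [← Real.rpow_natCast, ← Real.rpow_natCast, ← Real.rpow_natCast, ← Real.rpow_mul hq₀.le,
      ← Real.rpow_mul hq₀.le, ← Real.rpow_mul hq₀.le, ← Real.rpow_add hq₀]
    ring_nf
  have hle := one_sub_rpow_le_natCeil_mul (pow_pos hq₀ k) (pow_le_one₀ hq₀.le hq₁.le) (r := b - a)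
  rw [qLogCoeff, min_eq_left hab, abs_sub_comm a b, abs_of_nonneg (sub_nonneg.mpr hab), abs_div,
    abs_of_pos hqk, div_le_iff₀ hqk, hsplit, abs_sub_comm, ← mul_one_sub,
    abs_of_nonneg (mul_nonneg (by positivity) (sub_nonneg.mpr (Real.rpow_le_one (by positivity)
      (pow_le_one₀ hq₀.le hq₁.le) (sub_nonneg.mpr hab))))]
  calc (q ^ a) ^ k * (1 - (q ^ k) ^ (b - a)) ≤ (q ^ a) ^ k * (⌈b - a⌉₊ * (1 - q ^ k)) :=
        mul_le_mul_of_nonneg_left hle (by positivity)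
    _ = _ := by ring

lemma eventually_rpow_mul_lt (e : ℝ) {s r : ℝ} (h : s < r) : ∀ᶠ q in 𝓝 (1 : ℝ), q ^ e * s < r := by
  have : Tendsto (fun q : ℝ => q ^ e * s) (𝓝 1) (𝓝 s) := by
    simpa using (Real.continuousAt_rpow_const 1 e (Or.inl one_ne_zero)).tendsto.mul_const s
  exact this.eventually_lt_const h

lemma tendsto_tsum_mul_qLogCoeff (a b : ℝ) {x : ℂ} (hx : ‖x‖ < 1) :
    Tendsto (fun q => ∑' k : ℕ, x ^ k / k * qLogCoeff a b q k) (𝓝[<] 1)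
      (𝓝 (-Complex.log (1 - x) * (a - b : ℝ))) := by
  obtain ⟨ρ, hxρ, hρ₁⟩ := exists_between hx
  have hbound : ∀ᶠ q in 𝓝[<] 1, ∀ k : ℕ, ‖x ^ k / k * qLogCoeff a b q k‖ ≤ ⌈|a - b|⌉₊ * ρ ^ k := by
    filter_upwards [Ioo_mem_nhdsLT zero_lt_one,
      nhdsWithin_le_nhds (eventually_rpow_mul_lt (min a b) hxρ)] with q hq hρ k
    have hpow₀ : 0 ≤ q ^ min a b := Real.rpow_nonneg hq.1.le _
    calc ‖x ^ k / k * qLogCoeff a b q k‖ ≤ ‖x‖ ^ k * |qLogCoeff a b q k| := by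
          rw [norm_mul, Complex.norm_real, Real.norm_eq_abs]
          gcongr
          exact norm_pow_div_natCast_le x k
      _ ≤ ‖x‖ ^ k * (⌈|a - b|⌉₊ * (q ^ min a b) ^ k) := by
          gcongr
          exact abs_qLogCoeff_le hq k
      _ = ⌈|a - b|⌉₊ * (q ^ min a b * ‖x‖) ^ k := by ring
      _ ≤ _ := by gcongr
  have hlim (k : ℕ) : Tendsto (fun q => x ^ k / k * qLogCoeff a b q k) (𝓝[<] 1)
      (𝓝 (x ^ k / k * (a - b : ℝ))) := by
    rcases eq_or_ne k 0 with rfl | hk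
    · simp
    · exact ((Complex.continuous_ofReal.tendsto _).comp ((tendsto_qLogCoeff a b hk).mono_left
        (nhdsWithin_mono _ fun q hq => hq.ne))).const_mul _
  have hsum : Summable fun k : ℕ => (⌈|a - b|⌉₊ : ℝ) * ρ ^ k :=
    (summable_geometric_of_lt_one ((norm_nonneg x).trans hxρ.le) hρ₁).mul_left _
  have := tendsto_tsum_of_dominated_convergence hsum hlim hbound
  rwa [((Complex.hasSum_taylorSeries_neg_log hx).mul_right _).tsum_eq] at this

/-- For real exponents `a, b`, the limit as `q → 1⁻` (along real `q ∈ (0,1)`) of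
`(x | q^a, q)_∞ / (x | q^b, q)_∞` equals `(1-x)^(b-a)` for `‖x‖ < 1`. -/
theorem stmt0 (a b : ℝ) (x : ℂ) (hx : ‖x‖ < 1) :
    Filter.Tendsto
      (fun q : ℝ => qPoch x ((q : ℂ) ^ (a : ℂ)) (q : ℂ) / qPoch x ((q : ℂ) ^ (b : ℂ)) (q : ℂ))
      (nhdsWithin 1 (Set.Ioo (0 : ℝ) 1))
      (nhds ((1 - x) ^ ((b : ℂ) - (a : ℂ)))) := by
  have hx₁ : (1 : ℂ) - x ≠ 0 := sub_ne_zero.mpr fun h => by simp [← h] at hx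
  have hval : Complex.exp (-Complex.log (1 - x) * (a - b : ℝ)) = (1 - x) ^ ((b : ℂ) - a) := by
    rw [Complex.cpow_def_of_ne_zero hx₁]
    push_cast
    ring_nf
  rw [nhdsWithin_Ioo_eq_nhdsLT zero_lt_one, ← hval]
  refine ((Complex.continuous_exp.tendsto _).comp (tendsto_tsum_mul_qLogCoeff a b hx)).congr' ?_
  filter_upwards [Ioo_mem_nhdsLT zero_lt_one, nhdsWithin_le_nhds (eventually_rpow_mul_lt a hx),
    nhdsWithin_le_nhds (eventually_rpow_mul_lt b hx)] with q hq ha hb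
  exact (qPoch_rpow_div_qPoch_rpow hq ha hb).symm
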